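/- Bound of the stabilization seminorm by the broken gradient norm (the estimate for term II used in the proofs of Lemma 8.1 and Proposition 6.1): under the multimesh volume setup, Σ_{i=0}^{N-1} Σ_{j=i+1}^N ∫_{O_{ij}} |∇v_i − ∇v_j|² dx ≤ 2 N_O Σ_{i=0}^N ∫_{Ω_{h,i}} |∇v_i|² dx. -/
import Mathlib


open MeasureTheory
open scoped Classical

/-- Bound of the stabilization seminorm by the broken gradient norm:
`Σ_{i<j} ∫_{O_{ij}} |∇v_i − ∇v_j|² ≤ 2 N_O Σ_i ∫_{Ω_{h,i}} |∇v_i|²`. -/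
theorem multimesh_stabilization_bound
    (d N : ℕ) (hd : 1 ≤ d)
    (Ω Ωh : Fin (N + 1) → Set (EuclideanSpace ℝ (Fin d)))
    (hΩmeas : ∀ i, MeasurableSet (Ω i))
    (hΩdisj : Pairwise (Function.onFun Disjoint Ω))
    (hΩhmeas : ∀ i, MeasurableSet (Ωh i))
    (hsub : ∀ i, Ω i ⊆ Ωh i)
    (hcover : ∀ i, Ωh i ⊆ ⋃ j ∈ Set.Ici i, Ω j)
    (v : Fin (N + 1) → EuclideanSpace ℝ (Fin d) → ℝ)
    (hv : ∀ i, Differentiable ℝ (v i))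
    (hvint : ∀ i, IntegrableOn (fun x => ‖gradient (v i) x‖ ^ 2) (Ωh i))
    (δ : Fin (N + 1) → Fin (N + 1) → ℕ)
    (hδlt : ∀ i j, i < j → δ i j = if 0 < volume (Ωh i ∩ Ω j) then 1 else 0)
    (hδdiag : ∀ i, δ i i = 1)
    (NO : ℕ)
    (hNO : NO = max
      (Finset.univ.sup fun i => ∑ j ∈ Finset.univ.filter fun j => i ≤ j, δ i j)
      (Finset.univ.sup fun j => ∑ i ∈ Finset.univ.filter fun i => i ≤ j, δ i j)) :
    ∑ i, ∑ j ∈ Finset.univ.filter fun j => i < j,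
        ∫ x in Ωh i ∩ Ω j, ‖gradient (v i) x - gradient (v j) x‖ ^ 2 ≤
      2 * (NO : ℝ) * ∑ i, ∫ x in Ωh i, ‖gradient (v i) x‖ ^ 2 := by
  -- abbreviations
  set g : Fin (N + 1) → EuclideanSpace ℝ (Fin d) → EuclideanSpace ℝ (Fin d) :=
    fun i => gradient (v i) with hg
  set A : Fin (N + 1) → ℝ := fun i => ∫ x in Ωh i, ‖g i x‖ ^ 2 with hA
  -- measurability of gradients
  have hmeas_g : ∀ i, Measurable (g i) := by
    intro i
    have : g i = fun x =>
        (InnerProductSpace.toDual ℝ (EuclideanSpace ℝ (Fin d))).symm (fderiv ℝ (v i) x) := rfl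
    rw [this]
    exact ((InnerProductSpace.toDual ℝ _).symm.continuous.measurable).comp
      (measurable_fderiv ℝ (v i))
  have hmeas_sq : ∀ i, Measurable fun x => ‖g i x‖ ^ 2 := fun i =>
    ((hmeas_g i).norm).pow_const 2
  have hmeas_diff : ∀ i j, Measurable fun x => ‖g i x - g j x‖ ^ 2 := fun i j =>
    (((hmeas_g i).sub (hmeas_g j)).norm).pow_const 2
  -- nonnegativity of A
  have hAnn : ∀ i, 0 ≤ A i := fun i =>
    setIntegral_nonneg (hΩhmeas i) fun x _ => by positivity
  -- integrability on the overlaps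
  have hI1 : ∀ i j : Fin (N + 1), IntegrableOn (fun x => ‖g i x‖ ^ 2) (Ωh i ∩ Ω j) :=
    fun i j => (hvint i).mono_set Set.inter_subset_left
  have hI2 : ∀ i j : Fin (N + 1), IntegrableOn (fun x => ‖g j x‖ ^ 2) (Ωh i ∩ Ω j) :=
    fun i j => (hvint j).mono_set (Set.inter_subset_right.trans (hsub j))
  have hIsum : ∀ i j : Fin (N + 1),
      IntegrableOn (fun x => 2 * ‖g i x‖ ^ 2 + 2 * ‖g j x‖ ^ 2) (Ωh i ∩ Ω j) :=
    fun i j => ((hI1 i j).const_mul 2).add ((hI2 i j).const_mul 2)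
  have hIdiff : ∀ i j : Fin (N + 1),
      IntegrableOn (fun x => ‖g i x - g j x‖ ^ 2) (Ωh i ∩ Ω j) := by
    intro i j
    refine Integrable.mono' (hIsum i j) (hmeas_diff i j).aestronglyMeasurable ?_
    refine Filter.Eventually.of_forall fun x => ?_
    rw [Real.norm_eq_abs, abs_of_nonneg (by positivity)]
    have hh : ‖g i x - g j x‖ ^ 2 ≤ (‖g i x‖ + ‖g j x‖) ^ 2 :=
      pow_le_pow_left₀ (norm_nonneg _) (norm_sub_le _ _) 2
    nlinarith [sq_nonneg (‖g i x‖ - ‖g j x‖)]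
  -- pointwise (per-pair) bound
  have key : ∀ i j : Fin (N + 1),
      (∫ x in Ωh i ∩ Ω j, ‖g i x - g j x‖ ^ 2) ≤
        2 * (∫ x in Ωh i ∩ Ω j, ‖g i x‖ ^ 2) + 2 * ∫ x in Ωh i ∩ Ω j, ‖g j x‖ ^ 2 := by
    intro i j
    have h1 : (∫ x in Ωh i ∩ Ω j, ‖g i x - g j x‖ ^ 2) ≤
        ∫ x in Ωh i ∩ Ω j, (2 * ‖g i x‖ ^ 2 + 2 * ‖g j x‖ ^ 2) := by
      refine setIntegral_mono_on (hIdiff i j) (hIsum i j)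
        ((hΩhmeas i).inter (hΩmeas j)) fun x _ => ?_
      have hh : ‖g i x - g j x‖ ^ 2 ≤ (‖g i x‖ + ‖g j x‖) ^ 2 :=
        pow_le_pow_left₀ (norm_nonneg _) (norm_sub_le _ _) 2
      nlinarith [sq_nonneg (‖g i x‖ - ‖g j x‖)]
    have h2 : (∫ x in Ωh i ∩ Ω j, (2 * ‖g i x‖ ^ 2 + 2 * ‖g j x‖ ^ 2)) =
        2 * (∫ x in Ωh i ∩ Ω j, ‖g i x‖ ^ 2) + 2 * ∫ x in Ωh i ∩ Ω j, ‖g j x‖ ^ 2 := by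
      rw [integral_add ((hI1 i j).const_mul 2) ((hI2 i j).const_mul 2),
        integral_const_mul, integral_const_mul]
    linarith
  -- the two partial sums
  set S1 : ℝ := ∑ i, ∑ j ∈ Finset.univ.filter fun j => i < j,
      ∫ x in Ωh i ∩ Ω j, ‖g i x‖ ^ 2 with hS1
  set S2 : ℝ := ∑ i, ∑ j ∈ Finset.univ.filter fun j => i < j,
      ∫ x in Ωh i ∩ Ω j, ‖g j x‖ ^ 2 with hS2
  have hstep1 : ∑ i, ∑ j ∈ Finset.univ.filter fun j => i < j,
      (∫ x in Ωh i ∩ Ω j, ‖g i x - g j x‖ ^ 2) ≤ 2 * S1 + 2 * S2 := by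
    rw [hS1, hS2, Finset.mul_sum, Finset.mul_sum, ← Finset.sum_add_distrib]
    refine Finset.sum_le_sum fun i _ => ?_
    rw [Finset.mul_sum, Finset.mul_sum, ← Finset.sum_add_distrib]
    exact Finset.sum_le_sum fun j _ => key i j
  -- bound on S1 : for fixed i the overlaps are disjoint subsets of Ωh i
  have hS1le : S1 ≤ ∑ i, A i := by
    refine Finset.sum_le_sum fun i _ => ?_
    have hdisj : Set.Pairwise (↑(Finset.univ.filter fun j => i < j))
        (Function.onFun Disjoint fun j => Ωh i ∩ Ω j) := by
      intro a _ b _ hab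
      exact (hΩdisj hab).mono Set.inter_subset_right Set.inter_subset_right
    have hunion : (∑ j ∈ Finset.univ.filter fun j => i < j,
        ∫ x in Ωh i ∩ Ω j, ‖g i x‖ ^ 2) =
        ∫ x in ⋃ j ∈ Finset.univ.filter fun j => i < j, Ωh i ∩ Ω j, ‖g i x‖ ^ 2 := by
      rw [integral_biUnion_finset _ (fun j _ => (hΩhmeas i).inter (hΩmeas j)) hdisj
        (fun j _ => hI1 i j)]
    rw [hunion]
    refine setIntegral_mono_set (hvint i)
      (Filter.Eventually.of_forall fun x => by positivity) ?_
    refine HasSubset.Subset.eventuallyLE ?_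
    exact Set.iUnion₂_subset fun j _ => Set.inter_subset_left
  -- bound on the column sums of δ
  have hδcol : ∀ j : Fin (N + 1),
      (∑ i ∈ Finset.univ.filter fun i => i < j, δ i j) + 1 ≤ NO := by
    intro j
    have hfilter : (Finset.univ.filter fun i : Fin (N + 1) => i ≤ j) =
        insert j (Finset.univ.filter fun i => i < j) := by
      ext i
      simp [le_iff_lt_or_eq, or_comm]
    have hle : (∑ i ∈ Finset.univ.filter fun i => i ≤ j, δ i j) ≤ NO := by
      rw [hNO]
      exact le_trans
        (Finset.le_sup (f := fun j => ∑ i ∈ Finset.univ.filter fun i => i ≤ j, δ i j)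
          (Finset.mem_univ j)) le_sup_right
    rw [hfilter, Finset.sum_insert (by simp)] at hle
    rw [hδdiag j] at hle
    omega
  -- bound on S2 : swap the order of summation
  have hS2le : S2 ≤ ((NO : ℝ) - 1) * ∑ i, A i := by
    have hswap : S2 = ∑ j, ∑ i ∈ Finset.univ.filter fun i => i < j,
        ∫ x in Ωh i ∩ Ω j, ‖g j x‖ ^ 2 := by
      rw [hS2]
      exact Finset.sum_comm' fun i j => by simp
    rw [hswap]
    have hjle : ∀ j : Fin (N + 1), (∑ i ∈ Finset.univ.filter fun i => i < j,
        ∫ x in Ωh i ∩ Ω j, ‖g j x‖ ^ 2) ≤ ((NO : ℝ) - 1) * A j := by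
      intro j
      have hterm : ∀ i ∈ Finset.univ.filter fun i => i < j,
          (∫ x in Ωh i ∩ Ω j, ‖g j x‖ ^ 2) ≤ (δ i j : ℝ) * A j := by
        intro i hi
        have hij : i < j := by simpa using hi
        rw [hδlt i j hij]
        split_ifs with hvol
        · push_cast
          rw [one_mul]
          refine setIntegral_mono_set (hvint j)
            (Filter.Eventually.of_forall fun x => by positivity) ?_
          exact HasSubset.Subset.eventuallyLE (Set.inter_subset_right.trans (hsub j))
        · have hz : volume (Ωh i ∩ Ω j) = 0 := by
            by_contra h
            exact hvol (pos_iff_ne_zero.mpr h)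
          rw [Measure.restrict_eq_zero.mpr hz, integral_zero_measure]
          simp
      calc (∑ i ∈ Finset.univ.filter fun i => i < j,
              ∫ x in Ωh i ∩ Ω j, ‖g j x‖ ^ 2)
          ≤ ∑ i ∈ Finset.univ.filter fun i => i < j, (δ i j : ℝ) * A j :=
            Finset.sum_le_sum hterm
        _ = ((∑ i ∈ Finset.univ.filter fun i => i < j, δ i j : ℕ) : ℝ) * A j := by
            rw [← Finset.sum_mul]; push_cast; ring
        _ ≤ ((NO : ℝ) - 1) * A j := by
            refine mul_le_mul_of_nonneg_right ?_ (hAnn j)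
            have := hδcol j
            have h1 : ((∑ i ∈ Finset.univ.filter fun i => i < j, δ i j : ℕ) : ℝ) + 1 ≤
                (NO : ℝ) := by exact_mod_cast this
            linarith
    calc (∑ j, ∑ i ∈ Finset.univ.filter fun i => i < j,
            ∫ x in Ωh i ∩ Ω j, ‖g j x‖ ^ 2)
        ≤ ∑ j, ((NO : ℝ) - 1) * A j := Finset.sum_le_sum fun j _ => hjle j
      _ = ((NO : ℝ) - 1) * ∑ j, A j := by rw [Finset.mul_sum]
  -- conclude
  have hAsum : 0 ≤ ∑ i, A i := Finset.sum_nonneg fun i _ => hAnn i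
  have hfinal : 2 * S1 + 2 * S2 ≤ 2 * (NO : ℝ) * ∑ i, A i := by
    have h1 : 2 * S1 ≤ 2 * ∑ i, A i := by linarith
    have h2 : 2 * S2 ≤ 2 * (((NO : ℝ) - 1) * ∑ i, A i) := by linarith
    nlinarith
  exact le_trans hstep1 hfinal
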